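/- arXiv:0911.2510 — 2 statements merged into one kernel-verified Lean document; each statement's English description precedes it below -/
import Mathlib

section
/- If q is a primitive N-th root of unity with N odd, then for each k ∈ ℤⁿ the N-th power of the Weyl-ordered monomial satisfies (X_k)^N = X_{Nk} = (X_1^N)^{k_1} ⋯ (X_n^N)^{k_n}; in particular (X_k)^N lies in the subalgebra generated by the elements X_i^N. -/
/-!
Write `X^k` for the ordered product `X_1^{k_1} ⋯ X_n^{k_n}`. Since the `q`-powers in the relations
are central, moving every `X_i^{l_i}` of `X^l` to the left past the `X_j^{k_j}` with `j > i` gives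
`X^k X^l = q^{-2 Σ_{i<j} σ_{ij} l_i k_j} X^{k+l}`. For `l = c k` the exponent is `-2c` times the one
defining `X_k`, so `X_k X_{ck} = X_{(c+1)k}` and `(X_k)^N = X_{Nk}`. The scalar of `X_{Nk}` is
`q^{-N² Σ_{i<j} k_i k_j σ_{ij}} = 1`, leaving `X^{Nk} = ∏ (X_i^N)^{k_i}`, a product of units whose
inverses also lie in the subalgebra generated by the `X_i^{±N}`.
-/

open scoped BigOperators

/-- The antisymmetric bilinear form on `ℤⁿ` determined by the matrix `σ`. -/
def sigmaForm {n : ℕ} (σ : Fin n → Fin n → ℤ) (k l : Fin n → ℤ) : ℤ :=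
  ∑ i, ∑ j, k i * l j * σ i j

/-- The Weyl quantum ordered monomial `X_k = q^{-Σ_{i<j} k_i k_j σ_{ij}} X_1^{k_1} ⋯ X_n^{k_n}`
associated to a family of invertible elements `X` of a `ℂ`-algebra. -/
noncomputable def weyl (q : ℂ) {n : ℕ} (σ : Fin n → Fin n → ℤ)
    {A : Type*} [Ring A] [Algebra ℂ A] (X : Fin n → Aˣ) (k : Fin n → ℤ) : A :=
  algebraMap ℂ A (q ^ (-(∑ i : Fin n, ∑ j : Fin n, if i < j then k i * k j * σ i j else 0))) *
    ((List.ofFn fun i => X i ^ k i).prod : Aˣ)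

theorem Fin.sum_sum_ite_lt_succ {M : Type*} [AddCommMonoid M] {n : ℕ}
    (f : Fin (n + 1) → Fin (n + 1) → M) :
    (∑ i, ∑ j, if i < j then f i j else 0) =
      ∑ j : Fin n, f 0 j.succ + ∑ i : Fin n, ∑ j : Fin n, if i < j then f i.succ j.succ else 0 := by
  simp [Fin.sum_univ_succ, Fin.succ_pos]

section CentralTwist

variable {G : Type*} [Group G] {z : G}

theorem zpow_mul_zpow_of_mul_eq_central_mul (hz : z ∈ Subgroup.center G) {x y : G}
    (h : x * y = z * (y * x)) (a b : ℤ) : x ^ a * y ^ b = z ^ (a * b) * (y ^ b * x ^ a) := by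
  have hzc : ∀ g : G, Commute z g := fun g => (Subgroup.mem_center_iff.mp hz g).symm
  have hxy : SemiconjBy x (y ^ b) (z ^ b * y ^ b) := by
    rw [← (hzc y).mul_zpow]
    exact SemiconjBy.zpow_right (by rw [SemiconjBy, h, mul_assoc]) b
  have hyx : SemiconjBy (y ^ b) (x ^ a) ((z ^ b)⁻¹ ^ a * x ^ a) := by
    rw [← ((hzc x).zpow_left b).inv_left.mul_zpow]
    refine SemiconjBy.zpow_right ?_ a
    rw [SemiconjBy, mul_assoc, hxy.eq, mul_assoc, inv_mul_cancel_left]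
  rw [hyx.eq]
  group

theorem list_ofFn_prod_mul_of_mul_eq_central_mul (hz : z ∈ Subgroup.center G) {n : ℕ} {u : Fin n → G}
    {w : G} {e : Fin n → ℤ} (h : ∀ i, u i * w = z ^ e i * (w * u i)) :
    (List.ofFn u).prod * w = z ^ (∑ i, e i) * (w * (List.ofFn u).prod) := by
  induction n with
  | zero => simp
  | succ n ih =>
    have hzc : Commute (u 0) (z ^ ∑ i : Fin n, e i.succ) :=
      Commute.zpow_right (Subgroup.mem_center_iff.mp hz (u 0)) _
    rw [List.ofFn_succ, List.prod_cons, Fin.sum_univ_succ, mul_assoc, ih (fun i => h i.succ),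
      hzc.left_comm, ← mul_assoc (u 0), h 0, add_comm (e 0), zpow_add]
    simp only [mul_assoc]

def orderedMonomial {n : ℕ} (x : Fin n → G) (k : Fin n → ℤ) : G :=
  (List.ofFn fun i => x i ^ k i).prod

theorem orderedMonomial_succ {n : ℕ} (x : Fin (n + 1) → G) (k : Fin (n + 1) → ℤ) :
    orderedMonomial x k = x 0 ^ k 0 * orderedMonomial (Fin.tail x) (Fin.tail k) := by
  rw [orderedMonomial, List.ofFn_succ, List.prod_cons]
  rfl

theorem orderedMonomial_mul_orderedMonomial (hz : z ∈ Subgroup.center G) {n : ℕ}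
    {x : Fin n → G} {e : Fin n → Fin n → ℤ}
    (h : ∀ i j, i < j → x i * x j = z ^ e i j * (x j * x i)) (k l : Fin n → ℤ) :
    orderedMonomial x k * orderedMonomial x l =
      z ^ (-∑ i, ∑ j, if i < j then e i j * l i * k j else 0) * orderedMonomial x (k + l) := by
  induction n with
  | zero => simp [orderedMonomial]
  | succ n ih =>
    have hswap : ∀ j : Fin n, x j.succ ^ k j.succ * x 0 ^ l 0 =
        z ^ (-(e 0 j.succ * l 0 * k j.succ)) * (x 0 ^ l 0 * x j.succ ^ k j.succ) := by
      intro j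
      rw [zpow_mul_zpow_of_mul_eq_central_mul (Subgroup.zpow_mem _ hz _) (h 0 j.succ j.succ_pos),
        ← mul_assoc, ← zpow_mul, ← zpow_add, show -(e 0 j.succ * l 0 * k j.succ) +
          e 0 j.succ * (l 0 * k j.succ) = 0 by ring, zpow_zero, one_mul]
    have hpull : orderedMonomial (Fin.tail x) (Fin.tail k) * x 0 ^ l 0 =
        z ^ (∑ j : Fin n, -(e 0 j.succ * l 0 * k j.succ)) *
          (x 0 ^ l 0 * orderedMonomial (Fin.tail x) (Fin.tail k)) :=
      list_ofFn_prod_mul_of_mul_eq_central_mul hz hswap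
    have hrest := ih (x := Fin.tail x) (e := fun i j => e i.succ j.succ)
      (fun i j hij => h i.succ j.succ (Fin.succ_lt_succ_iff.mpr hij)) (Fin.tail k) (Fin.tail l)
    have hexp : (-∑ i, ∑ j, if i < j then e i j * l i * k j else 0) =
        (∑ j : Fin n, -(e 0 j.succ * l 0 * k j.succ)) +
          -∑ i : Fin n, ∑ j : Fin n,
            if i < j then e i.succ j.succ * l i.succ * k j.succ else 0 := by
      rw [Fin.sum_sum_ite_lt_succ (fun i j => e i j * l i * k j), neg_add,
        Finset.sum_neg_distrib]
    rw [orderedMonomial_succ x k, orderedMonomial_succ x l, orderedMonomial_succ x (k + l), hexp]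
    have hzc : ∀ (m : ℤ) (g : G), Commute (z ^ m) g := fun m g =>
      (Commute.zpow_right (Subgroup.mem_center_iff.mp hz g) m).symm
    calc x 0 ^ k 0 * orderedMonomial (Fin.tail x) (Fin.tail k) *
          (x 0 ^ l 0 * orderedMonomial (Fin.tail x) (Fin.tail l))
        = x 0 ^ k 0 * (orderedMonomial (Fin.tail x) (Fin.tail k) * x 0 ^ l 0) *
            orderedMonomial (Fin.tail x) (Fin.tail l) := by simp only [mul_assoc]
      _ = z ^ (∑ j : Fin n, -(e 0 j.succ * l 0 * k j.succ)) * x 0 ^ (k 0 + l 0) *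
            (orderedMonomial (Fin.tail x) (Fin.tail k) *
              orderedMonomial (Fin.tail x) (Fin.tail l)) := by
        rw [hpull, ((hzc _ _).symm).left_comm, zpow_add]
        simp only [mul_assoc]
      _ = _ := by
        rw [hrest, zpow_add z]
        simp only [mul_assoc (G := G)]
        rw [((hzc _ (x 0 ^ (k 0 + l 0))).symm).left_comm]
        rfl

theorem orderedMonomial_mem {n : ℕ} {H : Subgroup G} {x : Fin n → G} (hx : ∀ i, x i ∈ H)
    (k : Fin n → ℤ) : orderedMonomial x k ∈ H :=
  H.list_prod_mem fun _ hy => by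
    obtain ⟨i, rfl⟩ := List.mem_ofFn.mp hy
    exact zpow_mem (hx i) _

end CentralTwist

section Weyl

variable {n : ℕ} {A : Type*} [Ring A] [Algebra ℂ A] {q : ℂ} {σ : Fin n → Fin n → ℤ}
  {X : Fin n → Aˣ}

def weylExponent (σ : Fin n → Fin n → ℤ) (k : Fin n → ℤ) : ℤ :=
  ∑ i, ∑ j, if i < j then k i * k j * σ i j else 0

theorem weylExponent_intMul (c : ℤ) (k : Fin n → ℤ) :
    weylExponent σ (fun i => c * k i) = c ^ 2 * weylExponent σ k := by
  simp only [weylExponent, Finset.mul_sum]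
  refine Finset.sum_congr rfl fun i _ => Finset.sum_congr rfl fun j _ => ?_
  split_ifs <;> ring

theorem weyl_eq_smul (k : Fin n → ℤ) :
    weyl q σ X k = q ^ (-weylExponent σ k) • ((orderedMonomial X k : Aˣ) : A) :=
  (Algebra.smul_def _ _).symm

theorem weyl_mul_weyl_intMul (hq : q ≠ 0)
    (hrel : ∀ i j, (X i : A) * X j = algebraMap ℂ A (q ^ (2 * σ i j)) * ((X j : A) * X i))
    (k : Fin n → ℤ) (c : ℤ) :
    weyl q σ X k * weyl q σ X (fun i => c * k i) = weyl q σ X (fun i => (c + 1) * k i) := by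
  set u : Aˣ := Units.map (algebraMap ℂ A : ℂ →* A) (Units.mk0 q hq)
  have hu : ∀ m : ℤ, ((u ^ m : Aˣ) : A) = algebraMap ℂ A (q ^ m) := fun m => by
    rw [← map_zpow, Units.coe_map, Units.val_zpow_eq_zpow_val, Units.val_mk0]; rfl
  have hcenter : u ∈ Subgroup.center Aˣ := Subgroup.mem_center_iff.mpr fun g =>
    Units.ext (Algebra.commutes q (g : A)).symm
  have hX : ∀ i j, i < j → X i * X j = u ^ (2 * σ i j) * (X j * X i) := fun i j _ =>
    Units.ext (by rw [Units.val_mul, Units.val_mul, Units.val_mul, hu, hrel])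
  have hexp : (∑ i, ∑ j, if i < j then 2 * σ i j * (c * k i) * k j else 0) =
      2 * c * weylExponent σ k := by
    simp only [weylExponent, Finset.mul_sum]
    refine Finset.sum_congr rfl fun i _ => Finset.sum_congr rfl fun j _ => ?_
    split_ifs <;> ring
  have hsum : (k + fun i => c * k i) = fun i => (c + 1) * k i := by
    funext i; simp only [Pi.add_apply]; ring
  rw [weyl_eq_smul, weyl_eq_smul, weyl_eq_smul, smul_mul_smul_comm, ← Units.val_mul,
    orderedMonomial_mul_orderedMonomial hcenter hX, hexp, hsum, Units.val_mul, hu,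
    ← Algebra.smul_def, smul_smul, ← zpow_add₀ hq, ← zpow_add₀ hq, weylExponent_intMul,
    weylExponent_intMul]
  ring_nf

theorem weyl_pow (hq : q ≠ 0)
    (hrel : ∀ i j, (X i : A) * X j = algebraMap ℂ A (q ^ (2 * σ i j)) * ((X j : A) * X i))
    (k : Fin n → ℤ) (m : ℕ) : weyl q σ X k ^ m = weyl q σ X (fun i => (m : ℤ) * k i) := by
  induction m with
  | zero => simp [weyl]
  | succ m ih =>
    rw [pow_succ', ih, weyl_mul_weyl_intMul hq hrel]
    push_cast
    rfl

theorem weyl_intMul_of_pow_eq_one {N : ℕ} (hq : q ^ N = 1) (k : Fin n → ℤ) :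
    weyl q σ X (fun i => (N : ℤ) * k i) = orderedMonomial (fun i => X i ^ (N : ℤ)) k := by
  rw [weyl_eq_smul, weylExponent_intMul, sq, mul_assoc, ← mul_neg, zpow_mul, zpow_natCast, hq,
    one_zpow, one_smul]
  simp only [orderedMonomial, zpow_mul]

end Weyl

theorem weyl_pow_N_general {n : ℕ} (N : ℕ) (q : ℂ) (hq : IsPrimitiveRoot q N)
    (σ : Fin n → Fin n → ℤ)
    {A : Type*} [Ring A] [Algebra ℂ A] (X : Fin n → Aˣ)
    (hrel : ∀ i j, (X i : A) * X j = algebraMap ℂ A (q ^ (2 * σ i j)) * ((X j : A) * X i))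
    (k : Fin n → ℤ) :
    (weyl q σ X k) ^ N = weyl q σ X (fun i => (N : ℤ) * k i) ∧
    (weyl q σ X k) ^ N = ((List.ofFn fun i => (X i ^ (N : ℤ)) ^ k i).prod : Aˣ) ∧
    (weyl q σ X k) ^ N ∈
      Algebra.adjoin ℂ ((Set.range fun i => ((X i : A) ^ N)) ∪
        (Set.range fun i => (((X i)⁻¹ : Aˣ) : A) ^ N)) := by
  have hpow : weyl q σ X k ^ N = weyl q σ X (fun i => (N : ℤ) * k i) := by
    rcases eq_or_ne N 0 with rfl | hN
    · simp [weyl]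
    · exact weyl_pow (hq.ne_zero hN) hrel k N
  have hmon := weyl_intMul_of_pow_eq_one (σ := σ) (X := X) hq.pow_eq_one k
  refine ⟨hpow, hpow.trans hmon, ?_⟩
  rw [hpow, hmon]
  refine Submonoid.val_mem_of_mem_units _ (orderedMonomial_mem (H := Submonoid.units _)
    (fun i => (Submonoid.mem_units_iff _ _).mpr ⟨?_, ?_⟩) k)
  · rw [zpow_natCast, Units.val_pow_eq_pow_val]
    exact Algebra.subset_adjoin (Set.mem_union_left _ ⟨i, rfl⟩)
  · rw [zpow_natCast, ← inv_pow, Units.val_pow_eq_pow_val]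
    exact Algebra.subset_adjoin (Set.mem_union_right _ ⟨i, rfl⟩)

/-- If `q` is a primitive `N`-th root of unity with `N` odd, then
`(X_k)^N = X_{Nk} = (X_1^N)^{k_1} ⋯ (X_n^N)^{k_n}`; in particular `(X_k)^N` lies in the
subalgebra generated by the elements `X_i^N` (and their inverses, the generators being
invertible). -/
theorem weyl_pow_N {n : ℕ} (N : ℕ) (hN : Odd N) (q : ℂ) (hq : IsPrimitiveRoot q N)
    (σ : Fin n → Fin n → ℤ) (hσ : ∀ i j, σ i j = -σ j i)
    {A : Type*} [Ring A] [Algebra ℂ A] (X : Fin n → Aˣ)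
    (hrel : ∀ i j, (X i : A) * X j = algebraMap ℂ A (q ^ (2 * σ i j)) * ((X j : A) * X i))
    (k : Fin n → ℤ) :
    (weyl q σ X k) ^ N = weyl q σ X (fun i => (N : ℤ) * k i) ∧
    (weyl q σ X k) ^ N = ((List.ofFn fun i => (X i ^ (N : ℤ)) ^ k i).prod : Aˣ) ∧
    (weyl q σ X k) ^ N ∈
      Algebra.adjoin ℂ ((Set.range fun i => ((X i : A) ^ N)) ∪
        (Set.range fun i => (((X i)⁻¹ : Aˣ) : A) ^ N)) :=
  weyl_pow_N_general N q hq σ X hrel k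
end

section
/- Suppose C, D are elements of a ℂ-algebra acting on a finite-dimensional complex vector space V via a representation ρ, with CD = q⁴DC, where q is a primitive N-th root of unity with N odd, ρ(D) invertible, and ρ(C^N) = c·Id for some c ∈ ℂ*. Then the eigenvalues of ρ(C) are among {ζ q^i : i = 0,…,N-1} for some fixed N-th root ζ of c, and conjugation by ρ(D) permutes the eigenspaces of ρ(C), multiplying the eigenvalue by q⁴; consequently all eigenspaces of ρ(C) corresponding to eigenvalues ζ q^i, i = 0,…,N-1, have the same dimension. -/
/-!
Since `ρ(C)^N = c` is a scalar, every spectral value `z` of `ρ(C)` satisfies `z ^ N = c`, so it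
is `ζ q^i` for any fixed `N`-th root `ζ` of `c`. The relation `CD = q⁴DC` says that `ρ(D)`
carries the `μ`-eigenspace of `ρ(C)` isomorphically onto its `q⁴μ`-eigenspace. As `N` is odd,
`q⁴` is again a primitive `N`-th root of unity, so iterating moves `ζ q^i` to any `ζ q^j`.
-/

open Module End

theorem IsPrimitiveRoot.exists_eq_pow_mul_of_pow_eq {R : Type*} [CommRing R] [IsDomain R]
    {t : R} {n : ℕ} (ht : IsPrimitiveRoot t n) (hn : 0 < n) {x y : R} (h : x ^ n = y ^ n) :
    ∃ k < n, x = t ^ k * y := by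
  have hx : x ∈ Polynomial.nthRoots n (y ^ n) := (Polynomial.mem_nthRoots hn).mpr h
  rw [ht.nthRoots_eq rfl] at hx
  simpa [eq_comm] using hx

theorem spectrum.pow_eq_of_pow_eq_algebraMap {𝕜 A : Type*} [Field 𝕜] [Ring A] [Algebra 𝕜 A]
    [Nontrivial A] {a : A} {n : ℕ} {c : 𝕜} (ha : a ^ n = algebraMap 𝕜 A c) {k : 𝕜}
    (hk : k ∈ spectrum 𝕜 a) : k ^ n = c := by
  have hkn := spectrum.pow_mem_pow a n hk
  rwa [ha, spectrum.scalar_eq, Set.mem_singleton_iff] at hkn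

namespace Module.End

theorem map_eigenspace_le_of_mul_eq_smul_mul {R M : Type*} [CommRing R] [AddCommGroup M]
    [Module R M] {f g : End R M} {t : R} (hfg : f * g = t • (g * f)) (μ : R) :
    (eigenspace f μ).map g ≤ eigenspace f (t * μ) := by
  rintro _ ⟨v, hv, rfl⟩
  rw [SetLike.mem_coe, mem_eigenspace_iff] at hv
  rw [mem_eigenspace_iff, ← mul_apply, hfg, LinearMap.smul_apply, mul_apply, hv, map_smul, smul_smul]

variable {K V : Type*} [Field K] [AddCommGroup V] [Module K V] {f g : End K V} {t : K}

theorem map_eigenspace_of_mul_eq_smul_mul (hfg : f * g = t • (g * f)) (ht : t ≠ 0)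
    (hg : IsUnit g) (μ : K) : (eigenspace f μ).map g = eigenspace f (t * μ) := by
  refine le_antisymm (map_eigenspace_le_of_mul_eq_smul_mul hfg μ) fun w hw => ?_
  obtain ⟨v, rfl⟩ := ((isUnit_iff g).mp hg).surjective w
  refine ⟨v, ?_, rfl⟩
  rw [mem_eigenspace_iff] at hw
  rw [SetLike.mem_coe, mem_eigenspace_iff]
  have hg_apply : g (t • f v) = g (t • μ • v) :=
    calc g (t • f v) = (f * g) v := by rw [hfg, LinearMap.smul_apply, mul_apply, map_smul]
      _ = g (t • μ • v) := by rw [mul_apply, hw, smul_smul, map_smul]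
  exact (smul_right_inj ht).mp (((isUnit_iff g).mp hg).injective hg_apply)

theorem finrank_eigenspace_pow_mul_of_mul_eq_smul_mul (hfg : f * g = t • (g * f)) (ht : t ≠ 0)
    (hg : IsUnit g) (k : ℕ) (μ : K) :
    finrank K (eigenspace f (t ^ k * μ)) = finrank K (eigenspace f μ) := by
  induction k with
  | zero => rw [pow_zero, one_mul]
  | succ k ih =>
    rw [pow_succ', mul_assoc, ← map_eigenspace_of_mul_eq_smul_mul hfg ht hg, ← ih]
    exact (Submodule.equivMapOfInjective g ((isUnit_iff g).mp hg).injective _).finrank_eq.symm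

end Module.End

theorem eigenspace_decomposition_general {A : Type*} [Ring A] [Algebra ℂ A]
    {V : Type*} [AddCommGroup V] [Module ℂ V] [Nontrivial V]
    (N : ℕ) (hN : Odd N) (q : ℂ) (hq : IsPrimitiveRoot q N)
    (ρ : A →ₐ[ℂ] Module.End ℂ V) (C D : A) (c : ℂ)
    (hCD : C * D = (q ^ 4) • (D * C)) (hD : IsUnit (ρ D)) (hCN : ρ (C ^ N) = c • 1) :
    ∃ ζ : ℂ, ζ ^ N = c ∧
      (spectrum ℂ (ρ C) ⊆ {z | ∃ i : Fin N, z = ζ * q ^ (i : ℕ)}) ∧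
      (∀ μ : ℂ, Submodule.map (ρ D) (Module.End.eigenspace (ρ C) μ) =
        Module.End.eigenspace (ρ C) (q ^ 4 * μ)) ∧
      ∀ i j : Fin N,
        Module.finrank ℂ (Module.End.eigenspace (ρ C) (ζ * q ^ (i : ℕ))) =
        Module.finrank ℂ (Module.End.eigenspace (ρ C) (ζ * q ^ (j : ℕ))) := by
  have hN0 : 0 < N := hN.pos
  have hq4 : IsPrimitiveRoot (q ^ 4) N :=
    hq.pow_of_coprime 4 ((Nat.coprime_two_left.mpr hN).pow_left 2)
  have hq40 : q ^ 4 ≠ 0 := hq4.ne_zero hN0.ne'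
  have hρCD : ρ C * ρ D = q ^ 4 • (ρ D * ρ C) := by rw [← map_mul, hCD, map_smul, map_mul]
  have hρCN : ρ C ^ N = algebraMap ℂ _ c := by
    rw [← map_pow, hCN, Algebra.algebraMap_eq_smul_one]
  obtain ⟨ζ, hζ⟩ := IsAlgClosed.exists_pow_nat_eq c hN0
  refine ⟨ζ, hζ, fun z hz => ?_, map_eigenspace_of_mul_eq_smul_mul hρCD hq40 hD, fun i j => ?_⟩
  · obtain ⟨k, hk, rfl⟩ := hq.exists_eq_pow_mul_of_pow_eq hN0
      ((spectrum.pow_eq_of_pow_eq_algebraMap hρCN hz).trans hζ.symm)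
    exact ⟨⟨k, hk⟩, mul_comm _ _⟩
  · have hpow : (ζ * q ^ (j : ℕ)) ^ N = (ζ * q ^ (i : ℕ)) ^ N := by
      simp only [mul_pow, pow_right_comm q _ N, hq.pow_eq_one, one_pow]
    obtain ⟨k, -, hk⟩ := hq4.exists_eq_pow_mul_of_pow_eq hN0 hpow
    rw [hk, finrank_eigenspace_pow_mul_of_mul_eq_smul_mul hρCD hq40 hD]

/-- if `ρ(C)ρ(D)` satisfy `CD = q⁴DC` with `q` a primitive `N`-th root of
unity (`N` odd), `ρ(D)` invertible and `ρ(C^N) = c·Id` with `c ≠ 0`, then the eigenvalues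
of `ρ(C)` are among `{ζ q^i}` for some `N`-th root `ζ` of `c`, conjugation by `ρ(D)`
permutes the eigenspaces of `ρ(C)` multiplying the eigenvalue by `q⁴`, and all the
eigenspaces for the eigenvalues `ζ q^i`, `i = 0, …, N-1`, have the same dimension. -/
theorem eigenspace_decomposition {A : Type*} [Ring A] [Algebra ℂ A]
    {V : Type*} [AddCommGroup V] [Module ℂ V] [FiniteDimensional ℂ V] [Nontrivial V]
    (N : ℕ) (hN : Odd N) (q : ℂ) (hq : IsPrimitiveRoot q N)
    (ρ : A →ₐ[ℂ] Module.End ℂ V) (C D : A) (c : ℂ) (hc : c ≠ 0)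
    (hCD : C * D = (q ^ 4) • (D * C)) (hD : IsUnit (ρ D)) (hCN : ρ (C ^ N) = c • 1) :
    ∃ ζ : ℂ, ζ ^ N = c ∧
      (spectrum ℂ (ρ C) ⊆ {z | ∃ i : Fin N, z = ζ * q ^ (i : ℕ)}) ∧
      (∀ μ : ℂ, Submodule.map (ρ D) (Module.End.eigenspace (ρ C) μ) =
        Module.End.eigenspace (ρ C) (q ^ 4 * μ)) ∧
      ∀ i j : Fin N,
        Module.finrank ℂ (Module.End.eigenspace (ρ C) (ζ * q ^ (i : ℕ))) =
        Module.finrank ℂ (Module.End.eigenspace (ρ C) (ζ * q ^ (j : ℕ))) :=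
  eigenspace_decomposition_general N hN q hq ρ C D c hCD hD hCN
end
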